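/- arXiv:2509.01862 — 8 statements merged into one kernel-verified Lean document; each statement's English description precedes it below -/
import Mathlib

section
/- Let h be a polynomial in n complex variables and let c ∈ ℂⁿ be a fixed vector. If the function z ↦ h(z) + h(z - c) is equal to a nonzero constant, then h itself is a nonzero constant polynomial. -/
open MvPolynomial

lemma aux_poly {p : Polynomial ℂ} (hp : ∀ t : ℂ, p.eval t = - p.eval (t + 1)) :
    p.eval 0 = 0 := by
  have hper : ∀ t : ℂ, p.eval (t + 2) = p.eval t := by
    intro t
    have h1 := hp t
    have h2 := hp (t + 1)
    have h3 : t + 1 + 1 = t + 2 := by ring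
    rw [h3] at h2
    rw [h1, h2]; ring
  have hk : ∀ k : ℕ, p.eval ((2 : ℂ) * k) = p.eval 0 := by
    intro k
    induction k with
    | zero => norm_num
    | succ m ih =>
      have h4 : (2 : ℂ) * ((m : ℂ) + 1) = 2 * (m : ℂ) + 2 := by ring
      push_cast
      rw [h4, hper, ih]
  have hzero : p - Polynomial.C (p.eval 0) = 0 := by
    apply Polynomial.eq_zero_of_infinite_isRoot
    apply Set.Infinite.mono (s := Set.range (fun k : ℕ => (2 * k : ℂ)))
    · rintro x ⟨k, rfl⟩
      simp [Polynomial.IsRoot, hk k]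
    · apply Set.infinite_range_of_injective
      intro i j hij
      field_simp at hij
      exact_mod_cast hij
  have hconst : ∀ t : ℂ, p.eval t = p.eval 0 := by
    intro t
    have := congrArg (Polynomial.eval t) hzero
    simpa [sub_eq_zero] using this
  have h0 := hp 0
  rw [hconst (0 + 1)] at h0
  have h2 : (2 : ℂ) * p.eval 0 = 0 := by linear_combination h0
  simpa using h2

lemma line_eval {n : ℕ} (h : MvPolynomial (Fin n) ℂ) (z c : Fin n → ℂ) (t : ℂ) :
    Polynomial.eval t
      (MvPolynomial.aeval (fun i => Polynomial.C (z i) - Polynomial.C (c i) * Polynomial.X) h)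
      = eval (fun i => z i - c i * t) h := by
  induction h using MvPolynomial.induction_on with
  | C b => simp
  | add p q hp hq => simp [hp, hq]
  | mul_X p i hp => simp [hp]

theorem stmt_1 {n : ℕ} (h : MvPolynomial (Fin n) ℂ) (c : Fin n → ℂ)
    (a : ℂ) (ha : a ≠ 0)
    (hyp : ∀ z : Fin n → ℂ, eval z h + eval (z - c) h = a) :
    ∃ b : ℂ, b ≠ 0 ∧ h = C b := by
  refine ⟨a / 2, by simpa using ha, ?_⟩
  have key : ∀ z : Fin n → ℂ, eval z h = a / 2 := by
    intro z
    set P : Polynomial ℂ :=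
      MvPolynomial.aeval (fun i => Polynomial.C (z i) - Polynomial.C (c i) * Polynomial.X) h
        with hP
    have hPe : ∀ t : ℂ, P.eval t = eval (fun i => z i - c i * t) h := fun t =>
      line_eval h z c t
    have hsum : ∀ t : ℂ, P.eval t + P.eval (t + 1) = a := by
      intro t
      have := hyp (fun i => z i - c i * t)
      have hw : (fun i => z i - c i * t) - c = fun i => z i - c i * (t + 1) := by
        funext i; simp [Pi.sub_apply]; ring
      rw [hw] at this
      rw [hPe t, hPe (t + 1)]
      exact this
    set Q : Polynomial ℂ := P - Polynomial.C (a / 2) with hQ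
    have hQe : ∀ t : ℂ, Q.eval t = - Q.eval (t + 1) := by
      intro t
      have := hsum t
      simp only [hQ, Polynomial.eval_sub, Polynomial.eval_C]
      linear_combination this
    have h0 := aux_poly hQe
    have hP0 : P.eval 0 = a / 2 := by
      have : P.eval 0 - a / 2 = 0 := by simpa [hQ] using h0
      linear_combination this
    have hfun : (fun i => z i - c i * 0) = z := by funext i; ring
    rw [← hfun, ← hPe 0, hP0]
  exact MvPolynomial.funext (fun z => by simp [key z])
end

section
/- Let g : ℂ → ℂ be entire, c ∈ ℂ, p₅ ∈ ℂ, q ∈ ℂ with q ≠ 0, and k = ±1. Suppose L(g)(z) := q·g'(z) satisfies L(g)(z-c)² = 1 - p₅² for all z, and suppose exp(i(g(z) + g(z-c))) = k·L(g)(z-c) + ik·p₅ for all z. Then, with f(z) := k·sin(g(z-c)), one has (q f'(z) + p₅ f(z))² + (k sin(g(z)))² = 1 for all z ∈ ℂ. -/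
open Complex

theorem stmt_6 (g : ℂ → ℂ) (hg : Differentiable ℂ g) (c p₅ q k : ℂ)
    (hq : q ≠ 0) (hk : k = 1 ∨ k = -1)
    (h1 : ∀ z : ℂ, (q * deriv g (z - c)) ^ 2 = 1 - p₅ ^ 2)
    (h2 : ∀ z : ℂ, exp (I * (g z + g (z - c))) = k * (q * deriv g (z - c)) + I * k * p₅)
    (f : ℂ → ℂ) (hf : ∀ z : ℂ, f z = k * Complex.sin (g (z - c))) :
    ∀ z : ℂ, (q * deriv f z + p₅ * f z) ^ 2 + (f (z + c)) ^ 2 = 1 := by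
  intro z
  have hk2 : k ^ 2 = 1 := by rcases hk with h | h <;> subst h <;> norm_num
  have hI : (I : ℂ) ^ 2 = -1 := Complex.I_sq
  have hfe : f = fun z => k * Complex.sin (g (z - c)) := funext hf
  have hdg : HasDerivAt (fun z : ℂ => g (z - c)) (deriv g (z - c)) z := by
    have := ((hg (z - c)).hasDerivAt).comp z ((hasDerivAt_id z).sub_const c)
    simpa [Function.comp_def] using this
  have hdf : HasDerivAt f (k * (Complex.cos (g (z - c)) * deriv g (z - c))) z := by
    rw [hfe]
    exact ((Complex.hasDerivAt_sin (g (z - c))).comp z hdg).const_mul k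
  have hdf' : deriv f z = k * (Complex.cos (g (z - c)) * deriv g (z - c)) := hdf.deriv
  set u := g z with hu
  set w := g (z - c) with hw
  set L := deriv g (z - c) with hL
  have h1z : (q * L) ^ 2 = 1 - p₅ ^ 2 := h1 z
  have h2z : exp (I * (u + w)) = k * (q * L) + I * k * p₅ := h2 z
  have hne : exp (I * (u + w)) ≠ 0 := Complex.exp_ne_zero _
  have h3 : exp (I * (u + w)) * (k * (q * L) - I * k * p₅) = 1 := by
    rw [h2z]
    linear_combination ((q * L) ^ 2 + p₅ ^ 2) * hk2 + h1z - k ^ 2 * p₅ ^ 2 * hI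
  have hinv : exp (-(I * (u + w))) = k * (q * L) - I * k * p₅ := by
    have h4 : exp (I * (u + w)) * exp (-(I * (u + w))) = 1 := by
      rw [← Complex.exp_add]; simp
    exact mul_left_cancel₀ hne (h4.trans h3.symm)
  have e1 : exp ((u + w) * I) = k * (q * L) + I * k * p₅ := by
    rw [mul_comm]; exact h2z
  have e2 : exp (-(u + w) * I) = k * (q * L) - I * k * p₅ := by
    rw [show (-(u + w)) * I = -(I * (u + w)) by ring]; exact hinv
  have hc : Complex.cos (u + w) = k * (q * L) := by
    rw [Complex.cos, e1, e2]; ring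
  have hs : Complex.sin (u + w) = k * p₅ := by
    rw [Complex.sin, e1, e2]
    linear_combination (-(k * p₅)) * hI
  have hcu : Complex.cos u = k * (q * L * Complex.cos w + p₅ * Complex.sin w) := by
    have h5 : u = (u + w) - w := by ring
    rw [h5, Complex.cos_sub, hc, hs]; ring
  have hfz : f z = k * Complex.sin w := hf z
  have hfzc : f (z + c) = k * Complex.sin u := by
    have := hf (z + c)
    simpa using this
  rw [hdf', hfz, hfzc]
  linear_combination (-(Complex.cos u + k * (q * L * Complex.cos w + p₅ * Complex.sin w))) * hcu
    + (Complex.sin u) ^ 2 * hk2 + Complex.sin_sq_add_cos_sq u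
end

section
/- Let a, b ∈ ℂ be nonzero, k = ±1, let p : ℂ → ℂ be a nonzero constant function with value P, and let g : ℂ → ℂ be entire with deriv g z = k·b/a for all z. Then f(z) := (k/(2ib))·(exp(ig(z)) - P·exp(-ig(z))) satisfies (a·f'(z))² + (b·f(z))² = P for all z ∈ ℂ. -/
/-! With `E = exp (i g)` and `F = exp (-i g)` we have `E F = 1`, `f = A (E - P F)` and, since `g' = k b / a`,
`f' = i A (k b / a) (E + P F)`. For `A = k / (2 i b)` and `k² = 1` this gives `a f' = (E + P F) / 2` and
`(b f)² = -(E - P F)² / 4`, so the sum is `((E + P F)² - (E - P F)²) / 4 = P E F = P`. -/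

open Complex

theorem hasDerivAt_cexp_sub_mul_cexp_neg {𝕜 : Type*} [NontriviallyNormedField 𝕜]
    [NormedAlgebra 𝕜 ℂ] {g : 𝕜 → ℂ} {c : ℂ} {z : 𝕜} (hg : HasDerivAt g c z) (P : ℂ) :
    HasDerivAt (fun z => exp (I * g z) - P * exp (-(I * g z)))
      (I * c * (exp (I * g z) + P * exp (-(I * g z)))) z := by
  have hIg : HasDerivAt (fun z => I * g z) (I * c) z := hg.const_mul I
  have hnegIg : HasDerivAt (fun z => -(I * g z)) (-(I * c)) z := hIg.neg
  exact (hIg.cexp.sub (hnegIg.cexp.const_mul P)).congr_deriv (by ring)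

theorem sq_cexp_add_mul_cexp_neg_sub_sq (w P : ℂ) :
    (exp w + P * exp (-w)) ^ 2 - (exp w - P * exp (-w)) ^ 2 = 4 * P := by
  have hinv : exp w * exp (-w) = 1 := by rw [← exp_add, add_neg_cancel, exp_zero]
  linear_combination 4 * P * hinv

theorem stmt_8_general (g : ℂ → ℂ) (hg : Differentiable ℂ g) (a b P k : ℂ)
    (ha : a ≠ 0) (hb : b ≠ 0) (hk : k ^ 2 = 1)
    (hg' : ∀ z : ℂ, deriv g z = k * b / a)
    (f : ℂ → ℂ)
    (hf : ∀ z : ℂ, f z = (k / (2 * I * b)) * (exp (I * g z) - P * exp (-(I * g z)))) :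
    ∀ z : ℂ, (a * deriv f z) ^ 2 + (b * f z) ^ 2 = P := by
  intro z
  set E := exp (I * g z)
  set F := exp (-(I * g z))
  have hgz : HasDerivAt g (k * b / a) z := hg' z ▸ (hg z).hasDerivAt
  have hfz : HasDerivAt f (k / (2 * I * b) * (I * (k * b / a) * (E + P * F))) z := by
    rw [funext hf]
    exact (hasDerivAt_cexp_sub_mul_cexp_neg hgz P).const_mul _
  have hderiv : a * deriv f z = (E + P * F) / 2 := by
    rw [hfz.deriv]
    field_simp
    linear_combination (E + P * F) * hk
  have hvalue : b * f z = -(I * k) / 2 * (E - P * F) := by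
    rw [hf z]
    field_simp
    linear_combination k * (E - P * F) * I_sq
  rw [hderiv, hvalue]
  linear_combination (sq_cexp_add_mul_cexp_neg_sub_sq (I * g z) P) / 4
    + (E - P * F) ^ 2 / 4 * (k ^ 2 * I_sq - hk)

theorem stmt_8 (g : ℂ → ℂ) (hg : Differentiable ℂ g) (a b P k : ℂ)
    (ha : a ≠ 0) (hb : b ≠ 0) (hP : P ≠ 0) (hk : k ^ 2 = 1)
    (hg' : ∀ z : ℂ, deriv g z = k * b / a)
    (f : ℂ → ℂ)
    (hf : ∀ z : ℂ, f z = (k / (2 * I * b)) * (exp (I * g z) - P * exp (-(I * g z)))) :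
    ∀ z : ℂ, (a * deriv f z) ^ 2 + (b * f z) ^ 2 = P :=
  stmt_8_general g hg a b P k ha hb hk hg' f hf
end

section
/- Let g : ℂ² → ℂ be an entire function with ∂g/∂z₁ ≡ 0, let c₁ ∈ ℂ with c₁ ≠ 0, and set f(z₁, z₂) = (1/(2i))·exp(i·g(z₁ - c₁, z₂)) + (z₁ - c₁)·exp(-i·g(z₁ - c₁, z₂)). Then for all (z₁, z₂) ∈ ℂ², writing f̄(z₁,z₂) = f(z₁ + c₁, z₂), one has (i·z₁·(∂f/∂z₁)(z₁,z₂) + i·f̄(z₁,z₂))² + (-3·z₁·(∂f/∂z₁)(z₁,z₂) + f̄(z₁,z₂))² = 4i·z₁. -/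
open Complex

theorem stmt_9 (g : ℂ × ℂ → ℂ) (hg : Differentiable ℂ g)
    (hg1 : ∀ z₁ z₂ : ℂ, deriv (fun w => g (w, z₂)) z₁ = 0)
    (c₁ : ℂ) (hc₁ : c₁ ≠ 0)
    (f : ℂ × ℂ → ℂ)
    (hf : ∀ z₁ z₂ : ℂ, f (z₁, z₂) =
      (1 / (2 * I)) * exp (I * g (z₁ - c₁, z₂))
      + (z₁ - c₁) * exp (-(I * g (z₁ - c₁, z₂)))) :
    ∀ z₁ z₂ : ℂ,
      (I * z₁ * deriv (fun w => f (w, z₂)) z₁ + I * f (z₁ + c₁, z₂)) ^ 2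
      + (-3 * z₁ * deriv (fun w => f (w, z₂)) z₁ + f (z₁ + c₁, z₂)) ^ 2
      = 4 * I * z₁ := by
  intro z₁ z₂
  -- g is constant in its first argument
  have hconst : ∀ w : ℂ, g (w, z₂) = g (0, z₂) := by
    intro w
    exact is_const_of_deriv_eq_zero
      (fun x => (hg.comp (differentiable_id.prodMk (differentiable_const z₂))) x)
      (hg1 · z₂) w 0
  set a : ℂ := g (0, z₂) with ha
  have hf' : ∀ w : ℂ, f (w, z₂) =
      (1 / (2 * I)) * exp (I * a) + (w - c₁) * exp (-(I * a)) := by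
    intro w
    rw [hf w z₂, hconst (w - c₁)]
  have hd : deriv (fun w => f (w, z₂)) z₁ = exp (-(I * a)) := by
    have : (fun w => f (w, z₂)) =
        fun w => (1 / (2 * I)) * exp (I * a) + (w - c₁) * exp (-(I * a)) := by
      funext w; exact hf' w
    rw [this]
    have h1 : HasDerivAt (fun w : ℂ =>
        (1 / (2 * I)) * exp (I * a) + (w - c₁) * exp (-(I * a)))
        (exp (-(I * a))) z₁ := by
      have := ((hasDerivAt_id z₁).sub_const c₁).mul_const (exp (-(I * a)))
      simpa using (this.const_add ((1 / (2 * I)) * exp (I * a)))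
    exact h1.deriv
  rw [hd, hf' (z₁ + c₁)]
  have hmul : exp (-(I * a)) * exp (I * a) = 1 := by
    rw [← Complex.exp_add]; simp
  have hI : I * I = -1 := Complex.I_mul_I
  have hh : (1:ℂ)/(2*I) = -I/2 := by
    rw [div_eq_div_iff (by simp [Complex.I_ne_zero]) two_ne_zero]
    linear_combination (2:ℂ)*hI
  rw [hh]
  set d := exp (-(I * a)) with hdd
  set e := exp (I * a) with hee
  linear_combination (4*z₁^2*d^2 + (I^2/4)*e^2 - 2*I*z₁*d*e) * hI + 4*I*z₁ * hmul
end

section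
/- Let m be a positive integer, g(z₁, z₂) = z₁ + z₂^m + 1, and P ∈ ℂ be any nonzero constant. Define f(z₁,z₂) = (1/(4i))·((1-i)·exp(i·g(z₁ - 2π, z₂)) - (1+i)·P·exp(-i·g(z₁ - 2π, z₂))). Then, with f̄(z₁,z₂) = f(z₁ + 2π, z₂), for all (z₁, z₂) ∈ ℂ²: ((∂f/∂z₁)(z₁,z₂) - f̄(z₁,z₂))² + ((∂f/∂z₁)(z₁,z₂) + f̄(z₁,z₂))² = P. -/
open Complex

theorem stmt_10 (m : ℕ) (hm : 0 < m) (P : ℂ) (hP : P ≠ 0)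
    (g : ℂ × ℂ → ℂ) (hg : ∀ z₁ z₂ : ℂ, g (z₁, z₂) = z₁ + z₂ ^ m + 1)
    (f : ℂ × ℂ → ℂ)
    (hf : ∀ z₁ z₂ : ℂ, f (z₁, z₂) =
      (1 / (4 * I)) * ((1 - I) * exp (I * g (z₁ - 2 * (Real.pi : ℂ), z₂))
        - (1 + I) * P * exp (-(I * g (z₁ - 2 * (Real.pi : ℂ), z₂))))) :
    ∀ z₁ z₂ : ℂ,
      (deriv (fun w => f (w, z₂)) z₁ - f (z₁ + 2 * (Real.pi : ℂ), z₂)) ^ 2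
      + (deriv (fun w => f (w, z₂)) z₁ + f (z₁ + 2 * (Real.pi : ℂ), z₂)) ^ 2
      = P := by
  intro z₁ z₂
  set u : ℂ := z₁ - 2 * (Real.pi : ℂ) + z₂ ^ m + 1 with hu
  have hfun : (fun w => f (w, z₂)) =
      fun w => (1 / (4 * I)) * ((1 - I) * exp (I * (w - 2 * (Real.pi : ℂ) + z₂ ^ m + 1))
        - (1 + I) * P * exp (-(I * (w - 2 * (Real.pi : ℂ) + z₂ ^ m + 1)))) := by
    funext w
    rw [hf, hg]
  have h1 : HasDerivAt (fun w : ℂ => I * (w - 2 * (Real.pi : ℂ) + z₂ ^ m + 1)) I z₁ := by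
    simpa using ((((hasDerivAt_id z₁).sub_const (2 * (Real.pi : ℂ))).add_const
      (z₂ ^ m)).add_const 1).const_mul I
  have h2 : HasDerivAt (fun w : ℂ => -(I * (w - 2 * (Real.pi : ℂ) + z₂ ^ m + 1))) (-I) z₁ :=
    h1.neg
  have hD : HasDerivAt (fun w => f (w, z₂))
      ((1 / (4 * I)) * ((1 - I) * (exp (I * u) * I)
        - (1 + I) * P * (exp (-(I * u)) * (-I)))) z₁ := by
    rw [hfun]
    exact ((h1.cexp.const_mul (1 - I)).sub (h2.cexp.const_mul ((1 + I) * P))).const_mul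
      (1 / (4 * I))
  have hDe := hD.deriv
  rw [hDe, hf, hg]
  have harg : z₁ + 2 * (Real.pi : ℂ) - 2 * (Real.pi : ℂ) + z₂ ^ m + 1 = u + 2 * (Real.pi : ℂ) := by
    rw [hu]; ring
  rw [harg]
  have hexp1 : exp (I * (u + 2 * (Real.pi : ℂ))) = exp (I * u) := by
    rw [mul_add, Complex.exp_add]
    have : I * (2 * (Real.pi : ℂ)) = 2 * Real.pi * I := by ring
    rw [this, Complex.exp_two_pi_mul_I, mul_one]
  have hexp2 : exp (-(I * (u + 2 * (Real.pi : ℂ)))) = exp (-(I * u)) := by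
    rw [Complex.exp_neg, Complex.exp_neg, hexp1]
  rw [hexp1, hexp2]
  have hAB : exp (I * u) * exp (-(I * u)) = 1 := by
    rw [← Complex.exp_add]; simp
  have hI : (I : ℂ) ^ 2 = -1 := Complex.I_sq
  set A := exp (I * u) with hA
  set B := exp (-(I * u)) with hB
  have hc : (1 : ℂ) / (4 * I) = -I / 4 := by
    rw [div_eq_div_iff (by simp [Complex.I_ne_zero]) (by norm_num)]
    linear_combination 4 * hI
  rw [hc]
  linear_combination P * hAB
    + ((1 / 8) * I ^ 2 * ((1 - I) ^ 2 * A ^ 2 + (1 + I) ^ 2 * P ^ 2 * B ^ 2)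
        - (1 / 4) * (I ^ 4 - 3 * I ^ 2 + 4) * P * A * B) * hI
end

section
/- Let k = ±1, g(z₁, z₂) = z₂ + z₁·exp(-2i·z₂), c = (0, π/2), and f(z₁, z₂) = k·exp(i·g(z₁, z₂ - π/2)). Then, with f̄(z₁,z₂) = f(z₁, z₂ + π/2), for all (z₁, z₂) ∈ ℂ²: (k·z₂·(∂f/∂z₁)(z₁,z₂) + (k/2)·f̄(z₁,z₂))² + (i·z₂·(∂f/∂z₁)(z₁,z₂) - (i/2)·f̄(z₁,z₂))² = -2·z₂. -/
open Complex

theorem stmt_11 (k : ℂ) (hk : k = 1 ∨ k = -1)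
    (g : ℂ × ℂ → ℂ)
    (hg : ∀ z₁ z₂ : ℂ, g (z₁, z₂) = z₂ + z₁ * exp (-(2 * I * z₂)))
    (f : ℂ × ℂ → ℂ)
    (hf : ∀ z₁ z₂ : ℂ, f (z₁, z₂) = k * exp (I * g (z₁, z₂ - (Real.pi : ℂ) / 2))) :
    ∀ z₁ z₂ : ℂ,
      (k * z₂ * deriv (fun w => f (w, z₂)) z₁
        + (k / 2) * f (z₁, z₂ + (Real.pi : ℂ) / 2)) ^ 2
      + (I * z₂ * deriv (fun w => f (w, z₂)) z₁
        - (I / 2) * f (z₁, z₂ + (Real.pi : ℂ) / 2)) ^ 2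
      = -2 * z₂ := by
  intro z₁ z₂
  set c : ℂ := z₂ - (Real.pi : ℂ) / 2 with hc
  set A : ℂ := exp (-(2 * I * c)) with hA
  have hA' : A = -exp (-(2 * I * z₂)) := by
    have h2 : -(2 * I * c) = -(2 * I * z₂) + Real.pi * I := by rw [hc]; ring
    rw [hA, h2, Complex.exp_add, Complex.exp_pi_mul_I]; ring
  have hfw : (fun w => f (w, z₂)) = fun w => k * exp (I * c + I * A * w) := by
    funext w
    have harg : I * (c + w * A) = I * c + I * A * w := by ring
    rw [hf, hg, ← hc, ← hA, harg]
  have hd : deriv (fun w => f (w, z₂)) z₁ = k * (exp (I * c + I * A * z₁) * (I * A)) := by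
    rw [hfw]
    have h1 : HasDerivAt (fun w : ℂ => I * c + I * A * w) (I * A) z₁ := by
      simpa using ((hasDerivAt_id z₁).const_mul (I * A)).const_add (I * c)
    exact ((h1.cexp).const_mul k).deriv
  have hf2 : f (z₁, z₂ + (Real.pi : ℂ) / 2)
      = k * exp (I * z₂) * exp (I * (exp (-(2 * I * z₂)) * z₁)) := by
    rw [hf, hg]
    have h3 : z₂ + (Real.pi : ℂ) / 2 - (Real.pi : ℂ) / 2 = z₂ := by ring
    rw [h3, mul_add, Complex.exp_add]
    ring_nf
  have hexpc : exp (I * c + I * A * z₁) =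
      exp (I * z₂) * (-I) * exp (-(I * (exp (-(2 * I * z₂)) * z₁))) := by
    rw [hA', hc]
    have harg : I * (z₂ - (Real.pi : ℂ) / 2) + I * -exp (-(2 * I * z₂)) * z₁
        = I * z₂ + (-((Real.pi : ℂ) / 2 * I)) + (-(I * (exp (-(2 * I * z₂)) * z₁))) := by ring
    have hI : exp ((Real.pi : ℂ) / 2 * I) = I := by
      rw [show ((Real.pi : ℂ) / 2) = ((Real.pi / 2 : ℝ) : ℂ) by push_cast; ring,
        Complex.exp_mul_I, ← Complex.ofReal_cos, ← Complex.ofReal_sin,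
        Real.cos_pi_div_two, Real.sin_pi_div_two]
      simp
    rw [harg, Complex.exp_add, Complex.exp_add, Complex.exp_neg, hI, inv_I]
  rw [hd, hf2, hexpc, hA']
  set P := exp (I * z₂) with hP
  set E := exp (-(2 * I * z₂)) with hE
  set u := exp (I * (E * z₁)) with hu
  set v := exp (-(I * (E * z₁))) with hv
  have huv : u * v = 1 := by
    rw [hu, hv, ← Complex.exp_add]; simp
  have hPE : P ^ 2 * E = 1 := by
    rw [hP, hE, sq, ← Complex.exp_add, ← Complex.exp_add]
    rw [show I * z₂ + I * z₂ + -(2 * I * z₂) = 0 by ring, Complex.exp_zero]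
  have hk2 : k ^ 2 = 1 := by rcases hk with h | h <;> rw [h] <;> ring
  linear_combination
    (((k ^ 2 + 1) * (z₂ * P * E * v * I ^ 2 + P * u / 2) ^ 2
        + I ^ 2 * (z₂ * P * E * v * I ^ 2 - P * u / 2) ^ 2) * hk2)
    + (((z₂ * P * E * v) ^ 2 * I ^ 4
        - 2 * (z₂ * P * E * v) * (P * u / 2) * I ^ 2
        + 4 * (z₂ * P * E * v) * (P * u / 2) + (P * u / 2) ^ 2) * Complex.I_sq)
    + ((-2 * z₂ * u * v) * hPE) + ((-2 * z₂) * huv)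
end

section
/- Let k = ±1, g(z₁, z₂) = z₂ + z₁·exp(2i·z₂), c = (0, -π/2), and f(z₁, z₂) = exp(-i·g(z₁, z₂ + π/2)). Then, with f̄(z₁,z₂) = f(z₁, z₂ - π/2), for all (z₁, z₂) ∈ ℂ²: ((1/2)·(∂f/∂z₁)(z₁,z₂) - i·z₂·f̄(z₁,z₂))² + (-(ki/2)·(∂f/∂z₁)(z₁,z₂) + k·z₂·f̄(z₁,z₂))² = -2i·z₂. -/
/-!
The left side equals `-2 i z₂ · (∂f/∂z₁) · f̄`, and `(∂f/∂z₁) · f̄ = 1`: on each slice `f` is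
`exp` of an affine function of `z₁` with slope `i e^{2iz₂}`, and the exponents of `f` and `f̄`
add up to `-2iz₂ - iπ/2`.
-/

open Complex

open scoped Real

lemma exp_two_mul_I_mul_add_pi_div_two (z : ℂ) :
    exp (2 * I * (z + π / 2)) = -exp (2 * I * z) := by
  rw [show 2 * I * (z + π / 2) = 2 * I * z + π * I by ring, exp_antiperiodic]

lemma deriv_exp_add_mul (a c z : ℂ) :
    deriv (fun w => exp (a + c * w)) z = c * exp (a + c * z) := by
  simpa [mul_comm] using (((hasDerivAt_id z).const_mul c).const_add a).cexp.deriv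

/-- With `u = A / 2` and `v = I z B` the left side is `(u - v) ^ 2 - k ^ 2 (u + v) ^ 2`. -/
lemma sq_add_sq_eq_of_sq_eq_one {k : ℂ} (hk : k ^ 2 = 1) (A B z : ℂ) :
    (1 / 2 * A - I * z * B) ^ 2 + (-(k * I / 2) * A + k * z * B) ^ 2 = -2 * I * z * (A * B) := by
  linear_combination (I ^ 2 * A ^ 2 / 4 - I * A * z * B + z ^ 2 * B ^ 2) * hk
    + (A ^ 2 / 4 + z ^ 2 * B ^ 2) * I_sq

theorem stmt_12 (k : ℂ) (hk : k = 1 ∨ k = -1)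
    (g : ℂ × ℂ → ℂ)
    (hg : ∀ z₁ z₂ : ℂ, g (z₁, z₂) = z₂ + z₁ * exp (2 * I * z₂))
    (f : ℂ × ℂ → ℂ)
    (hf : ∀ z₁ z₂ : ℂ, f (z₁, z₂) = exp (-(I * g (z₁, z₂ + (Real.pi : ℂ) / 2)))) :
    ∀ z₁ z₂ : ℂ,
      ((1 / 2) * deriv (fun w => f (w, z₂)) z₁
        - I * z₂ * f (z₁, z₂ - (Real.pi : ℂ) / 2)) ^ 2
      + (-(k * I / 2) * deriv (fun w => f (w, z₂)) z₁
        + k * z₂ * f (z₁, z₂ - (Real.pi : ℂ) / 2)) ^ 2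
      = -2 * I * z₂ := by
  intro z₁ z₂
  have hk2 : k ^ 2 = 1 := by rcases hk with rfl | rfl <;> norm_num
  set E := exp (2 * I * z₂)
  have hf_slice : (fun w => f (w, z₂)) = fun w => exp (-(I * (z₂ + π / 2)) + I * E * w) := by
    funext w
    rw [hf, hg, exp_two_mul_I_mul_add_pi_div_two]
    congr 1
    ring
  have hf_shift : f (z₁, z₂ - π / 2) = exp (-(I * z₂) - I * E * z₁) := by
    rw [hf, hg, sub_add_cancel]
    congr 1
    ring
  have hprod : deriv (fun w => f (w, z₂)) z₁ * f (z₁, z₂ - π / 2) = 1 := by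
    rw [hf_slice, deriv_exp_add_mul, hf_shift, mul_assoc, ← exp_add,
      show -(I * (z₂ + π / 2)) + I * E * z₁ + (-(I * z₂) - I * E * z₁)
        = -(2 * I * z₂) + -π / 2 * I by ring,
      exp_add, exp_neg, exp_neg_pi_div_two_mul_I]
    linear_combination (-I ^ 2) * mul_inv_cancel₀ (exp_ne_zero (2 * I * z₂)) - I_sq
  rw [sq_add_sq_eq_of_sq_eq_one hk2, hprod, mul_one]
end

section
/- Let a₁, a₂, b₁, b₂, A, D ∈ ℂ with D = (a₁b₂ - a₂b₁)/(2i) ≠ 0 (taking k = 1), a₁a₂ ≠ 0, and A² = (b₁b₂)/(a₁a₂). Let g : ℂ² → ℂ be given by g(z₁, z₂) = A·z₁ + g₂(z₂) for some entire g₂, let c = (c₁, c₂) ∈ ℂ², suppose g(z) - g(z - c) is a constant κ with exp(iκ) = b₂/(i·a₂·A). Define f(z) = (a₁·exp(i·g(z - c)) - a₂·exp(-i·g(z - c)))/(2iD). Then for all z ∈ ℂ²: ∂f/∂z₁(z) = (-b₁·exp(i·g(z)) + b₂·exp(-i·g(z)))/(2iD) and f(z + c) = (a₁·exp(i·g(z))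 - a₂·exp(-i·g(z)))/(2iD). -/
/-!
Along the first variable the phase `θ(w) = g((w, z₂) - c)` is affine with slope `A`, so
differentiating `a₁ e^{iθ} - a₂ e^{-iθ}` gives `iA (a₁ e^{iθ} + a₂ e^{-iθ})`. Since
`g z = θ + κ`, the prescribed value of `e^{iκ}` together with `A² a₁ a₂ = b₁ b₂` turns the two
terms into `-b₁ e^{i g z}` and `b₂ e^{-i g z}`. The shift identity is just `(z + c) - c = z`.
-/

open Complex

theorem hasDerivAt_exp_I_mul_sub_exp_neg_I_mul {θ : ℂ → ℂ} {θ' w : ℂ} (hθ : HasDerivAt θ θ' w)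
    (a₁ a₂ : ℂ) :
    HasDerivAt (fun w => a₁ * exp (I * θ w) - a₂ * exp (-(I * θ w)))
      (I * θ' * (a₁ * exp (I * θ w) + a₂ * exp (-(I * θ w)))) w := by
  have hplus : HasDerivAt (fun w => a₁ * exp (I * θ w)) (a₁ * (exp (I * θ w) * (I * θ'))) w :=
    (hθ.const_mul I).cexp.const_mul a₁
  have hminus :
      HasDerivAt (fun w => a₂ * exp (-(I * θ w))) (a₂ * (exp (-(I * θ w)) * -(I * θ'))) w :=
    (hθ.const_mul I).fun_neg.cexp.const_mul a₂
  exact (hplus.fun_sub hminus).congr_deriv (by ring)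

theorem I_mul_mul_exp_add_exp_neg_eq_of_exp_I_mul {a₁ a₂ b₁ b₂ A κ : ℂ}
    (hb : b₁ * b₂ = A ^ 2 * (a₁ * a₂)) (hκ : exp (I * κ) = b₂ / (I * a₂ * A)) (θ : ℂ) :
    I * A * (a₁ * exp (I * θ) + a₂ * exp (-(I * θ)))
      = -b₁ * exp (I * (θ + κ)) + b₂ * exp (-(I * (θ + κ))) := by
  have hne : b₂ / (I * a₂ * A) ≠ 0 := hκ ▸ exp_ne_zero _
  obtain ⟨hb₂, ha₂A⟩ := div_ne_zero_iff.mp hne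
  have ha₂ : a₂ ≠ 0 := right_ne_zero_of_mul (left_ne_zero_of_mul ha₂A)
  have hA : A ≠ 0 := right_ne_zero_of_mul ha₂A
  rw [mul_add I θ κ, neg_add, exp_add, exp_add, exp_neg (I * κ), hκ]
  field_simp
  linear_combination exp (I * θ) * hb + A ^ 2 * a₁ * a₂ * exp (I * θ) * I_sq

theorem stmt_18_general (a₁ a₂ b₁ b₂ A D : ℂ)
    (ha : a₁ * a₂ ≠ 0)
    (hA : A ^ 2 = (b₁ * b₂) / (a₁ * a₂))
    (g₂ : ℂ → ℂ)
    (g : ℂ × ℂ → ℂ)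
    (hg : ∀ z₁ z₂ : ℂ, g (z₁, z₂) = A * z₁ + g₂ z₂)
    (c : ℂ × ℂ) (κ : ℂ)
    (hκ : ∀ z : ℂ × ℂ, g z - g (z - c) = κ)
    (hκ' : exp (I * κ) = b₂ / (I * a₂ * A))
    (f : ℂ × ℂ → ℂ)
    (hf : ∀ z : ℂ × ℂ, f z =
      (a₁ * exp (I * g (z - c)) - a₂ * exp (-(I * g (z - c)))) / (2 * I * D)) :
    ∀ z : ℂ × ℂ,
      deriv (fun w => f (w, z.2)) z.1
        = (-b₁ * exp (I * g z) + b₂ * exp (-(I * g z))) / (2 * I * D) ∧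
      f (z + c) = (a₁ * exp (I * g z) - a₂ * exp (-(I * g z))) / (2 * I * D) := by
  rintro ⟨z₁, z₂⟩
  have hb : b₁ * b₂ = A ^ 2 * (a₁ * a₂) := by rw [hA, div_mul_cancel₀ _ ha]
  have hphase : ∀ w : ℂ, g ((w, z₂) - c) = A * w + (g₂ (z₂ - c.2) - A * c.1) := fun w => by
    rw [← Prod.mk.eta (p := c), Prod.mk_sub_mk, hg]; ring
  have hphase_deriv : HasDerivAt (fun w => g ((w, z₂) - c)) A z₁ := by
    simp_rw [hphase]
    simpa using ((hasDerivAt_id z₁).const_mul A).add_const (g₂ (z₂ - c.2) - A * c.1)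
  have hderiv := (hasDerivAt_exp_I_mul_sub_exp_neg_I_mul hphase_deriv a₁ a₂).div_const (2 * I * D)
  have hshift : g (z₁, z₂) = g ((z₁, z₂) - c) + κ := by rw [← hκ (z₁, z₂)]; ring
  constructor
  · simp_rw [hf]
    rw [hderiv.deriv, hshift, I_mul_mul_exp_add_exp_neg_eq_of_exp_I_mul hb hκ']
  · rw [hf, add_sub_cancel_right]

theorem stmt_18 (a₁ a₂ b₁ b₂ A D : ℂ)
    (hD : D = (a₁ * b₂ - a₂ * b₁) / (2 * I)) (hD0 : D ≠ 0)
    (ha : a₁ * a₂ ≠ 0)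
    (hA : A ^ 2 = (b₁ * b₂) / (a₁ * a₂))
    (g₂ : ℂ → ℂ) (hg₂ : Differentiable ℂ g₂)
    (g : ℂ × ℂ → ℂ)
    (hg : ∀ z₁ z₂ : ℂ, g (z₁, z₂) = A * z₁ + g₂ z₂)
    (c : ℂ × ℂ) (κ : ℂ)
    (hκ : ∀ z : ℂ × ℂ, g z - g (z - c) = κ)
    (hκ' : exp (I * κ) = b₂ / (I * a₂ * A))
    (f : ℂ × ℂ → ℂ)
    (hf : ∀ z : ℂ × ℂ, f z =
      (a₁ * exp (I * g (z - c)) - a₂ * exp (-(I * g (z - c)))) / (2 * I * D)) :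
    ∀ z : ℂ × ℂ,
      deriv (fun w => f (w, z.2)) z.1
        = (-b₁ * exp (I * g z) + b₂ * exp (-(I * g z))) / (2 * I * D) ∧
      f (z + c) = (a₁ * exp (I * g z) - a₂ * exp (-(I * g z))) / (2 * I * D) :=
  stmt_18_general a₁ a₂ b₁ b₂ A D ha hA g₂ g hg c κ hκ hκ' f hf
end
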